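/- arXiv:2511.19466 — 2 statements merged into one kernel-verified Lean document; each statement's English description precedes it below -/
import Mathlib

section
/- Combining the residual bound with the margin condition: let H ≻ 0 with λ_min(H) ≥ m, suppose scores Î(z) = -φᵀg_z and I(z) = -(H⁻¹v)ᵀg_z over a finite sample set S, the residual satisfies ‖v - Hφ‖ ≤ ε_r, and (max_{z∈S}‖g_z‖/m)·ε_r < γ_K/2 where γ_K is the top-K margin of the true scores. Then the top-K set under Î equals the top-K set under I. -/
/-!
Write `w = H⁻¹ v` for the exact solution. Since `H (φ - w) = H φ - v` and `H` is bounded below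
by `m`, the residual bound gives `‖φ - w‖ ≤ εr / m`, so by Cauchy–Schwarz every approximate score
`-⟪φ, g z⟫` is within `(max ‖g z‖ / m) εr < γ / 2` of the true score `-⟪w, g z⟫`. Perturbations
smaller than half the margin cannot swap an element of the true top-`K` set with one outside it.
-/

open Matrix RealInnerProductSpace

namespace Matrix.IsHermitian

variable {n : Type*} [Fintype n] [DecidableEq n] {H : Matrix n n ℝ} {m : ℝ}

theorem mul_norm_sq_le_inner_toEuclideanLin (hH : H.IsHermitian)
    (hmin : ∀ i, m ≤ hH.eigenvalues i) (x : EuclideanSpace ℝ n) :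
    m * ‖x‖ ^ 2 ≤ ⟪x, toEuclideanLin H x⟫ := by
  set b := hH.eigenvectorBasis
  have hsymm : (toEuclideanLin H).IsSymmetric := isSymmetric_toEuclideanLin_iff.mpr hH
  have hb : ∀ i, toEuclideanLin H (b i) = hH.eigenvalues i • b i := fun i => by
    ext j
    simpa [toLpLin_apply] using congrFun (hH.mulVec_eigenvectorBasis i) j
  have hcoord : ∀ i, ⟪b i, toEuclideanLin H x⟫ = hH.eigenvalues i * ⟪b i, x⟫ := fun i => by
    rw [← hsymm, hb, real_inner_smul_left]
  rw [← real_inner_self_eq_norm_sq, ← b.sum_inner_mul_inner x x,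
    ← b.sum_inner_mul_inner x (toEuclideanLin H x), Finset.mul_sum]
  refine Finset.sum_le_sum fun i _ => ?_
  rw [hcoord, real_inner_comm x (b i)]
  nlinarith [hmin i, mul_self_nonneg ⟪b i, x⟫]

theorem mul_norm_le_norm_toEuclideanLin (hH : H.IsHermitian)
    (hmin : ∀ i, m ≤ hH.eigenvalues i) (x : EuclideanSpace ℝ n) :
    m * ‖x‖ ≤ ‖toEuclideanLin H x‖ := by
  rcases eq_or_ne x 0 with rfl | hx
  · simp
  have hpos : 0 < ‖x‖ := norm_pos_iff.mpr hx
  have := (hH.mul_norm_sq_le_inner_toEuclideanLin hmin x).trans (real_inner_le_norm _ _)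
  nlinarith

end Matrix.IsHermitian

theorem Matrix.PosDef.norm_sub_toEuclideanLin_inv_le {n : Type*} [Fintype n] [DecidableEq n]
    {H : Matrix n n ℝ} (hH : H.PosDef) {m : ℝ} (hm : 0 < m)
    (hmin : ∀ i, m ≤ hH.isHermitian.eigenvalues i) (v φ : EuclideanSpace ℝ n) :
    ‖φ - toEuclideanLin H⁻¹ v‖ ≤ ‖v - toEuclideanLin H φ‖ / m := by
  have hsolve : toEuclideanLin H (toEuclideanLin H⁻¹ v) = v := by
    ext j
    simp [toLpLin_apply, mulVec_mulVec, mul_nonsing_inv H ((isUnit_iff_isUnit_det H).mp hH.isUnit)]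
  rw [le_div_iff₀ hm, mul_comm]
  calc m * ‖φ - toEuclideanLin H⁻¹ v‖ ≤ ‖toEuclideanLin H (φ - toEuclideanLin H⁻¹ v)‖ :=
        hH.isHermitian.mul_norm_le_norm_toEuclideanLin hmin _
    _ = ‖v - toEuclideanLin H φ‖ := by rw [map_sub, hsolve, norm_sub_rev]

theorem stmt8_general {d : ℕ} {α : Type*} [Fintype α] [Nonempty α]
    (H : Matrix (Fin d) (Fin d) ℝ) (hH : H.PosDef)
    (m : ℝ) (hm : 0 < m) (hmin : ∀ i, m ≤ hH.isHermitian.eigenvalues i)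
    (v φ : EuclideanSpace ℝ (Fin d)) (g : α → EuclideanSpace ℝ (Fin d))
    (T : Finset α) (γ εr : ℝ)
    (hmargin : ∀ z ∈ T, ∀ u ∉ T,
      γ ≤ (-⟪Matrix.toEuclideanLin H⁻¹ v, g z⟫) - (-⟪Matrix.toEuclideanLin H⁻¹ v, g u⟫))
    (hres : ‖v - Matrix.toEuclideanLin H φ‖ ≤ εr)
    (hsmall : (Finset.univ.sup' Finset.univ_nonempty fun z => ‖g z‖) / m * εr < γ / 2) :
    ∀ z ∈ T, ∀ u ∉ T, (-⟪φ, g u⟫) < (-⟪φ, g z⟫) := by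
  set w := toEuclideanLin H⁻¹ v
  set M := Finset.univ.sup' Finset.univ_nonempty fun z => ‖g z‖
  have herr : ‖φ - w‖ ≤ εr / m :=
    (hH.norm_sub_toEuclideanLin_inv_le hm hmin v φ).trans (div_le_div_of_nonneg_right hres hm.le)
  have hεr : 0 ≤ εr / m := (norm_nonneg _).trans herr
  have hclose : ∀ a, |⟪φ, g a⟫ - ⟪w, g a⟫| < γ / 2 := fun a =>
    calc |⟪φ, g a⟫ - ⟪w, g a⟫| = |⟪φ - w, g a⟫| := by rw [inner_sub_left]
      _ ≤ ‖φ - w‖ * ‖g a‖ := abs_real_inner_le_norm _ _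
      _ ≤ εr / m * M :=
        mul_le_mul herr (Finset.le_sup' (fun z => ‖g z‖) (Finset.mem_univ a)) (norm_nonneg _) hεr
      _ = M / m * εr := by ring
      _ < γ / 2 := hsmall
  intro z hz u hu
  have := hmargin z hz u hu
  linarith [abs_lt.mp (hclose z), abs_lt.mp (hclose u)]

theorem stmt8 {d : ℕ} {α : Type*} [Fintype α] [DecidableEq α] [Nonempty α]
    (H : Matrix (Fin d) (Fin d) ℝ) (hH : H.PosDef)
    (m : ℝ) (hm : 0 < m) (hmin : ∀ i, m ≤ hH.isHermitian.eigenvalues i)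
    (v φ : EuclideanSpace ℝ (Fin d)) (g : α → EuclideanSpace ℝ (Fin d))
    (K : ℕ) (T : Finset α) (hT : T.card = K) (γ εr : ℝ) (hγ : 0 < γ)
    (hmargin : ∀ z ∈ T, ∀ u ∉ T,
      γ ≤ (-⟪Matrix.toEuclideanLin H⁻¹ v, g z⟫) - (-⟪Matrix.toEuclideanLin H⁻¹ v, g u⟫))
    (hres : ‖v - Matrix.toEuclideanLin H φ‖ ≤ εr)
    (hsmall : (Finset.univ.sup' Finset.univ_nonempty fun z => ‖g z‖) / m * εr < γ / 2) :
    ∀ z ∈ T, ∀ u ∉ T, (-⟪φ, g u⟫) < (-⟪φ, g z⟫) :=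
  stmt8_general H hH m hm hmin v φ g T γ εr hmargin hres hsmall
end

section
/- Single-anchor influence error bound in terms of residual: with H ≻ 0, λ_min(H) ≥ m, residual r = v - Hφ, c ∈ [0,1], I = -vᵀH⁻¹g, Î = -c·φᵀg, we have |Î - I| ≤ (c‖g‖/m)‖r‖ + (1 - c)‖H⁻¹‖‖g‖ where ‖H⁻¹‖ ≤ 1/m. -/
/-!
Write `u = H⁻¹v` for the exact influence direction. Applying `H⁻¹` to `v = Hφ + r` gives
`u = φ + H⁻¹r`, so `c⟪φ, g⟫ - ⟪u, g⟫ = -(c⟪H⁻¹r, g⟫ + (1 - c)⟪u, g⟫)`, and Cauchy–Schwarz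
bounds the two terms. Both `‖H⁻¹r‖ ≤ ‖r‖ / m` and `‖H⁻¹‖ ≤ 1 / m` come from the coercivity
`m‖x‖² ≤ ⟪x, Hx⟫`, read off in an orthonormal eigenbasis of `H`.
-/

open Matrix RealInnerProductSpace

lemma norm_le_div_of_mul_norm_sq_le_inner {E : Type*} [NormedAddCommGroup E]
    [InnerProductSpace ℝ E] {m : ℝ} (hm : 0 < m) {x y : E} (h : m * ‖x‖ ^ 2 ≤ ⟪x, y⟫) :
    ‖x‖ ≤ ‖y‖ / m := by
  rw [le_div_iff₀ hm]
  rcases (norm_nonneg x).eq_or_lt with hx | hx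
  · rw [← hx, zero_mul]; positivity
  · nlinarith [h.trans (real_inner_le_norm x y)]

lemma abs_mul_inner_sub_inner_le {E : Type*} [NormedAddCommGroup E] [InnerProductSpace ℝ E]
    {φ e u g : E} (hu : u = φ + e) {c : ℝ} (hc0 : 0 ≤ c) (hc1 : c ≤ 1) :
    |c * ⟪φ, g⟫ - ⟪u, g⟫| ≤ c * ‖e‖ * ‖g‖ + (1 - c) * ‖u‖ * ‖g‖ := by
  have hsplit : c * ⟪φ, g⟫ - ⟪u, g⟫ = -(c * ⟪e, g⟫ + (1 - c) * ⟪u, g⟫) := by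
    rw [hu, inner_add_left]; ring
  rw [hsplit, abs_neg]
  calc |c * ⟪e, g⟫ + (1 - c) * ⟪u, g⟫|
      ≤ c * |⟪e, g⟫| + (1 - c) * |⟪u, g⟫| := by
        refine (abs_add_le _ _).trans_eq ?_
        rw [abs_mul, abs_mul, abs_of_nonneg hc0, abs_of_nonneg (sub_nonneg.2 hc1)]
    _ ≤ c * (‖e‖ * ‖g‖) + (1 - c) * (‖u‖ * ‖g‖) := by
        have hc1' := sub_nonneg.2 hc1
        gcongr <;> exact abs_real_inner_le_norm _ _
    _ = c * ‖e‖ * ‖g‖ + (1 - c) * ‖u‖ * ‖g‖ := by ring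

namespace Matrix

variable {n : Type*} [Fintype n] [DecidableEq n]

lemma IsHermitian.mul_norm_sq_le_inner_toEuclideanLin_s10 {H : Matrix n n ℝ} (hH : H.IsHermitian)
    {m : ℝ} (hmin : ∀ i, m ≤ hH.eigenvalues i) (x : EuclideanSpace ℝ n) :
    m * ‖x‖ ^ 2 ≤ ⟪x, toEuclideanLin H x⟫ := by
  set b := hH.eigenvectorBasis
  have hb : ∀ i, ⟪b i, toEuclideanLin H x⟫ = hH.eigenvalues i * ⟪b i, x⟫ := by
    intro i
    have hbi : toEuclideanLin H (b i) = hH.eigenvalues i • b i := by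
      apply WithLp.ofLp_injective
      simpa only [ofLp_toLpLin, toLin'_apply, WithLp.ofLp_smul] using
        hH.mulVec_eigenvectorBasis i
    rw [← isSymmetric_toEuclideanLin_iff.mpr hH (b i) x, hbi, real_inner_smul_left]
  rw [← real_inner_self_eq_norm_sq, ← b.sum_inner_mul_inner x x,
    ← b.sum_inner_mul_inner x (toEuclideanLin H x), Finset.mul_sum]
  refine Finset.sum_le_sum fun i _ => ?_
  rw [hb, real_inner_comm x (b i)]
  linarith [mul_le_mul_of_nonneg_right (hmin i) (mul_self_nonneg ⟪x, b i⟫)]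

lemma toEuclideanLin_mul_inv_apply {H : Matrix n n ℝ} (hH : IsUnit H)
    (x : EuclideanSpace ℝ n) :
    toEuclideanLin H (toEuclideanLin H⁻¹ x) = x := by
  apply WithLp.ofLp_injective
  rw [ofLp_toLpLin, ofLp_toLpLin, toLin'_apply, toLin'_apply, mulVec_mulVec,
    mul_nonsing_inv H ((isUnit_iff_isUnit_det H).1 hH), one_mulVec]

lemma toEuclideanLin_inv_mul_apply {H : Matrix n n ℝ} (hH : IsUnit H)
    (x : EuclideanSpace ℝ n) :
    toEuclideanLin H⁻¹ (toEuclideanLin H x) = x := by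
  apply WithLp.ofLp_injective
  rw [ofLp_toLpLin, ofLp_toLpLin, toLin'_apply, toLin'_apply, mulVec_mulVec,
    nonsing_inv_mul H ((isUnit_iff_isUnit_det H).1 hH), one_mulVec]

lemma PosDef.norm_toEuclideanLin_inv_apply_le {H : Matrix n n ℝ} (hH : H.PosDef) {m : ℝ}
    (hm : 0 < m) (hmin : ∀ i, m ≤ hH.isHermitian.eigenvalues i) (x : EuclideanSpace ℝ n) :
    ‖toEuclideanLin H⁻¹ x‖ ≤ ‖x‖ / m := by
  have hcoer :=
    hH.isHermitian.mul_norm_sq_le_inner_toEuclideanLin_s10 hmin (toEuclideanLin H⁻¹ x)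
  rw [toEuclideanLin_mul_inv_apply hH.isUnit] at hcoer
  exact norm_le_div_of_mul_norm_sq_le_inner hm hcoer

lemma PosDef.norm_toEuclideanCLM_inv_le {H : Matrix n n ℝ} (hH : H.PosDef) {m : ℝ}
    (hm : 0 < m) (hmin : ∀ i, m ≤ hH.isHermitian.eigenvalues i) :
    ‖toEuclideanCLM (𝕜 := ℝ) (n := n) H⁻¹‖ ≤ 1 / m :=
  ContinuousLinearMap.opNorm_le_bound _ (by positivity) fun x =>
    (hH.norm_toEuclideanLin_inv_apply_le hm hmin x).trans_eq (by ring)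

end Matrix

theorem stmt10 {d : ℕ} (H : Matrix (Fin d) (Fin d) ℝ) (hH : H.PosDef)
    (m : ℝ) (hm : 0 < m) (hmin : ∀ i, m ≤ hH.isHermitian.eigenvalues i)
    (v φ g r : EuclideanSpace ℝ (Fin d))
    (hr : r = v - Matrix.toEuclideanLin H φ)
    (c : ℝ) (hc0 : 0 ≤ c) (hc1 : c ≤ 1) :
    |(-(c * ⟪φ, g⟫)) - (-⟪Matrix.toEuclideanLin H⁻¹ v, g⟫)|
      ≤ c * ‖g‖ / m * ‖r‖
        + (1 - c) * ‖Matrix.toEuclideanCLM (𝕜 := ℝ) (n := Fin d) H⁻¹‖ * ‖v‖ * ‖g‖ ∧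
    ‖Matrix.toEuclideanCLM (𝕜 := ℝ) (n := Fin d) H⁻¹‖ ≤ 1 / m := by
  set u := toEuclideanLin H⁻¹ v
  have hu : u = φ + toEuclideanLin H⁻¹ r := by
    rw [hr, map_sub, toEuclideanLin_inv_mul_apply hH.isUnit, add_sub_cancel]
  have hr_le : ‖toEuclideanLin H⁻¹ r‖ ≤ ‖r‖ / m := hH.norm_toEuclideanLin_inv_apply_le hm hmin r
  have hu_le : ‖u‖ ≤ ‖toEuclideanCLM (𝕜 := ℝ) (n := Fin d) H⁻¹‖ * ‖v‖ :=
    (toEuclideanCLM (𝕜 := ℝ) (n := Fin d) H⁻¹).le_opNorm v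
  refine ⟨?_, hH.norm_toEuclideanCLM_inv_le hm hmin⟩
  rw [neg_sub_neg, abs_sub_comm]
  have hc1' := sub_nonneg.2 hc1
  calc _ ≤ c * ‖toEuclideanLin H⁻¹ r‖ * ‖g‖ + (1 - c) * ‖u‖ * ‖g‖ :=
        abs_mul_inner_sub_inner_le hu hc0 hc1
    _ ≤ c * (‖r‖ / m) * ‖g‖
          + (1 - c) * (‖toEuclideanCLM (𝕜 := ℝ) (n := Fin d) H⁻¹‖ * ‖v‖) * ‖g‖ := by
        gcongr
    _ = _ := by ring
end
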